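/- Let (Ω, μ) be a measure space with μ(Ω) < ∞. Let p : Ω → ℝ be a measurable prior density with p ≥ 0 and ∫_Ω p dμ = 1. Let L, L_N : Ω → ℝ be measurable likelihood functions and suppose there are constants 0 < A ≤ B with A ≤ L(x) ≤ B and A ≤ L_N(x) ≤ B for all N and all x ∈ Ω. Define γ = ∫_Ω L p dμ, γ_N = ∫_Ω L_N p dμ, f = L·p/γ, and f_N = L_N·p/γ_N. Suppose there are a constant C > 0 and a sequence (Q_N) with Q_N → 0 such that sup_{x ∈ Ω} |L_N(x) − L(x)| ≤ C·Q_N for every N. Then there exists a constant K > 0, independent of N, such that for every N, D_KL(f_N ‖ f) = ∫_Ω f_N log(f_N/f) dμ ≤ K·Q_N². -/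

import Mathlib

/-!
Because both posteriors are normalized, the first-order term `∫ (f_N - f)` vanishes, so
`D_KL(f_N ‖ f) = ∫ (f_N log (f_N / f) - (f_N - f))`. Pointwise `f log (f_N / f) ≤ f_N - f`, so the
integrand is at most `(f_N - f) log (f_N / f)`, a product of two factors that are each `O(Q_N)`:
`log` is `1/A`-Lipschitz on `[A, ∞)`, and `|γ_N - γ| ≤ C Q_N` because `p` is a probability density.
-/

open Filter MeasureTheory Set

namespace Real

lemma abs_log_sub_log_le {A s t : ℝ} (hA : 0 < A) (hs : A ≤ s) (ht : A ≤ t) :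
    |log t - log s| ≤ |t - s| / A := by
  wlog hst : s ≤ t generalizing s t
  · rw [abs_sub_comm, abs_sub_comm t s]
    exact this ht hs (le_of_not_ge hst)
  have hs0 : 0 < s := hA.trans_le hs
  rw [abs_of_nonneg (sub_nonneg.2 (log_le_log hs0 hst)), abs_of_nonneg (sub_nonneg.2 hst),
    ← log_div (hs0.trans_le hst).ne' hs0.ne']
  calc log (t / s) ≤ t / s - 1 := log_le_sub_one_of_pos (div_pos (hs0.trans_le hst) hs0)
    _ = (t - s) / s := by field_simp
    _ ≤ (t - s) / A := div_le_div_of_nonneg_left (sub_nonneg.2 hst) hA hs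

lemma abs_log_div_div_div_le {A a a' c c' : ℝ} (hA : 0 < A) (ha : A ≤ a) (ha' : A ≤ a')
    (hc : A ≤ c) (hc' : A ≤ c') :
    |log ((a' / c') / (a / c))| ≤ (|a' - a| + |c' - c|) / A := by
  have pos : ∀ {y}, A ≤ y → y ≠ 0 := fun hy => (hA.trans_le hy).ne'
  rw [log_div (div_ne_zero (pos ha') (pos hc')) (div_ne_zero (pos ha) (pos hc)),
    log_div (pos ha') (pos hc'), log_div (pos ha) (pos hc),
    show log a' - log c' - (log a - log c) = (log a' - log a) - (log c' - log c) by ring, add_div]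
  exact (abs_sub _ _).trans
    (add_le_add (abs_log_sub_log_le hA ha ha') (abs_log_sub_log_le hA hc hc'))

lemma abs_div_sub_div_le {A B a a' c c' : ℝ} (hA : 0 < A) (ha : a ∈ Icc A B) (hc : c ∈ Icc A B)
    (hc' : A ≤ c') :
    |a' / c' - a / c| ≤ B * (|a' - a| + |c' - c|) / A ^ 2 := by
  have hc0 : 0 < c := hA.trans_le hc.1
  have hc'0 : 0 < c' := hA.trans_le hc'
  have hnum : |(a' - a) * c - a * (c' - c)| ≤ B * (|a' - a| + |c' - c|) :=
    calc |(a' - a) * c - a * (c' - c)| ≤ |a' - a| * c + a * |c' - c| := by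
          grw [abs_sub, abs_mul, abs_mul, abs_of_pos hc0, abs_of_pos (hA.trans_le ha.1)]
      _ ≤ |a' - a| * B + B * |c' - c| := by gcongr; exacts [hc.2, ha.2]
      _ = B * (|a' - a| + |c' - c|) := by ring
  rw [div_sub_div _ _ hc'0.ne' hc0.ne', show a' * c - c' * a = (a' - a) * c - a * (c' - c) by ring,
    abs_div, abs_of_pos (mul_pos hc'0 hc0)]
  exact div_le_div₀ ((abs_nonneg _).trans hnum) hnum (by positivity)
    (by nlinarith [hc.1])

lemma mul_log_div_le {r r' t : ℝ} (hr : 0 < r) (hr' : 0 < r') (ht : 0 ≤ t) :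
    r' * t * log (r' * t / (r * t)) ≤ |r' - r| * |log (r' / r)| * t + (r' * t - r * t) := by
  rcases ht.eq_or_lt with rfl | ht
  · simp
  rw [mul_div_mul_right _ _ ht.ne']
  have hgibbs : r * log (r' / r) ≤ r' - r :=
    calc r * log (r' / r) ≤ r * (r' / r - 1) :=
          mul_le_mul_of_nonneg_left (log_le_sub_one_of_pos (div_pos hr' hr)) hr.le
      _ = r' - r := by field_simp
  have hprod : (r' - r) * log (r' / r) ≤ |r' - r| * |log (r' / r)| := by
    rw [← abs_mul]; exact le_abs_self _
  nlinarith

lemma mul_log_div_le_of_mem_Icc {A B a a' c c' t ε : ℝ} (hA : 0 < A) (ha : a ∈ Icc A B)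
    (ha' : A ≤ a') (hc : c ∈ Icc A B) (hc' : A ≤ c') (hε : |a' - a| + |c' - c| ≤ 2 * ε)
    (ht : 0 ≤ t) :
    a' / c' * t * log (a' / c' * t / (a / c * t)) ≤
      4 * B * ε ^ 2 / A ^ 3 * t + (a' / c' * t - a / c * t) := by
  have hlog := abs_log_div_div_div_le hA ha.1 ha' hc.1 hc'
  have hdiff := abs_div_sub_div_le (a' := a') hA ha hc hc'
  have hB : 0 ≤ B := hA.le.trans ha.1 |>.trans ha.2
  refine (mul_log_div_le ?_ ?_ ht).trans (add_le_add (mul_le_mul_of_nonneg_right ?_ ht) le_rfl)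
  · exact div_pos (hA.trans_le ha.1) (hA.trans_le hc.1)
  · exact div_pos (hA.trans_le ha') (hA.trans_le hc')
  calc _ ≤ B * (|a' - a| + |c' - c|) / A ^ 2 * ((|a' - a| + |c' - c|) / A) :=
        mul_le_mul hdiff hlog (abs_nonneg _) ((abs_nonneg _).trans hdiff)
    _ = B * (|a' - a| + |c' - c|) ^ 2 / A ^ 3 := by field_simp
    _ ≤ B * (2 * ε) ^ 2 / A ^ 3 := by gcongr
    _ = 4 * B * ε ^ 2 / A ^ 3 := by ring

end Real

section ProbabilityDensity

variable {Ω : Type*} [MeasurableSpace Ω] {μ : Measure Ω} {p g L L' : Ω → ℝ} {A B ε : ℝ}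

lemma abs_integral_mul_le (hp : ∀ x, 0 ≤ p x) (hp1 : ∫ x, p x ∂μ = 1)
    (hgε : ∀ x, |g x| ≤ ε) :
    |∫ x, g x * p x ∂μ| ≤ ε := by
  have hp_int := integrable_of_integral_eq_one hp1
  calc |∫ x, g x * p x ∂μ| ≤ ∫ x, ε * p x ∂μ :=
        norm_integral_le_of_norm_le (f := fun x => g x * p x) (hp_int.const_mul ε) <|
          .of_forall fun x => by
            rw [Real.norm_eq_abs, abs_mul, abs_of_nonneg (hp x)]
            exact mul_le_mul_of_nonneg_right (hgε x) (hp x)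
    _ = ε := by rw [integral_const_mul, hp1, mul_one]

lemma integrable_mul_of_mem_Icc (hp_int : Integrable p μ) (hL : Measurable L)
    (hLb : ∀ x, L x ∈ Icc A B) : Integrable (fun x => L x * p x) μ :=
  hp_int.bdd_mul hL.aestronglyMeasurable (c := max |A| |B|)
    (.of_forall fun x => abs_le_max_abs_abs (hLb x).1 (hLb x).2)

lemma integral_mul_mem_Icc (hp : ∀ x, 0 ≤ p x) (hp1 : ∫ x, p x ∂μ = 1) (hL : Measurable L)
    (hLb : ∀ x, L x ∈ Icc A B) : ∫ x, L x * p x ∂μ ∈ Icc A B := by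
  have hp_int := integrable_of_integral_eq_one hp1
  have hLp := integrable_mul_of_mem_Icc hp_int hL hLb
  have hconst : ∀ c : ℝ, ∫ x, c * p x ∂μ = c := fun c => by rw [integral_const_mul, hp1, mul_one]
  constructor
  · calc A = ∫ x, A * p x ∂μ := (hconst A).symm
      _ ≤ ∫ x, L x * p x ∂μ := integral_mono (hp_int.const_mul A) hLp fun x =>
          mul_le_mul_of_nonneg_right (hLb x).1 (hp x)
  · calc ∫ x, L x * p x ∂μ ≤ ∫ x, B * p x ∂μ := integral_mono hLp (hp_int.const_mul B) fun x =>
          mul_le_mul_of_nonneg_right (hLb x).2 (hp x)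
      _ = B := hconst B

lemma integral_le_of_le_mul_add_sub {F g h : Ω → ℝ} {c : ℝ} (hc : 0 ≤ c)
    (hp1 : ∫ x, p x ∂μ = 1) (hg : Integrable g μ) (hh : Integrable h μ)
    (hgh : ∫ x, g x ∂μ = ∫ x, h x ∂μ) (hF : ∀ x, F x ≤ c * p x + (g x - h x)) :
    ∫ x, F x ∂μ ≤ c := by
  have hp_int := integrable_of_integral_eq_one hp1
  have hgh_int : Integrable (fun x => g x - h x) μ := hg.sub hh
  by_cases hF_int : Integrable F μ
  · calc ∫ x, F x ∂μ ≤ ∫ x, (c * p x + (g x - h x)) ∂μ :=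
          integral_mono hF_int ((hp_int.const_mul c).add hgh_int) hF
      _ = c := by
          rw [integral_add (hp_int.const_mul c) hgh_int, integral_sub hg hh, integral_const_mul,
            hp1, hgh]
          ring
  · rwa [integral_undef hF_int]

noncomputable def posterior (μ : Measure Ω) (p L : Ω → ℝ) (x : Ω) : ℝ :=
  L x * p x / ∫ y, L y * p y ∂μ

lemma integral_posterior (h : ∫ x, L x * p x ∂μ ≠ 0) : ∫ x, posterior μ p L x ∂μ = 1 := by
  simp only [posterior, integral_div, div_self h]

lemma integrable_posterior (hLp : Integrable (fun x => L x * p x) μ) :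
    Integrable (posterior μ p L) μ :=
  hLp.div_const _

lemma posterior_eq_div_mul (x : Ω) :
    posterior μ p L x = L x / (∫ y, L y * p y ∂μ) * p x :=
  mul_div_right_comm _ _ _

theorem integral_posterior_mul_log_div_le (hA : 0 < A) (hp : ∀ x, 0 ≤ p x)
    (hp1 : ∫ x, p x ∂μ = 1) (hL : Measurable L) (hL' : Measurable L')
    (hLb : ∀ x, L x ∈ Icc A B) (hL'b : ∀ x, L' x ∈ Icc A B) (hε : ∀ x, |L' x - L x| ≤ ε) :
    ∫ x, posterior μ p L' x * Real.log (posterior μ p L' x / posterior μ p L x) ∂μ ≤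
      4 * B * ε ^ 2 / A ^ 3 := by
  have hp_int := integrable_of_integral_eq_one hp1
  set γ := ∫ x, L x * p x ∂μ
  set γ' := ∫ x, L' x * p x ∂μ
  have hγ : γ ∈ Icc A B := integral_mul_mem_Icc hp hp1 hL hLb
  have hγ' : γ' ∈ Icc A B := integral_mul_mem_Icc hp hp1 hL' hL'b
  have hLp := integrable_mul_of_mem_Icc hp_int hL hLb
  have hL'p := integrable_mul_of_mem_Icc hp_int hL' hL'b
  have hγγ' : |γ' - γ| ≤ ε := by
    rw [← integral_sub hL'p hLp]
    simpa only [Pi.sub_apply, sub_mul] using abs_integral_mul_le hp hp1 hε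
  have hB : 0 ≤ B := hA.le.trans hγ.1 |>.trans hγ.2
  refine integral_le_of_le_mul_add_sub (by positivity) hp1 (integrable_posterior hL'p)
    (integrable_posterior hLp)
    (by rw [integral_posterior (hA.trans_le hγ'.1).ne', integral_posterior (hA.trans_le hγ.1).ne'])
    fun x => ?_
  simp only [posterior_eq_div_mul]
  exact Real.mul_log_div_le_of_mem_Icc hA (hLb x) (hL'b x).1 hγ hγ'.1
    (by linarith [hε x]) (hp x)

end ProbabilityDensity

theorem KL_posterior_reversed_doubled_rate_general
    {Ω : Type*} [MeasurableSpace Ω] (μ : Measure Ω)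
    (p : Ω → ℝ) (hp_nonneg : ∀ x, 0 ≤ p x)
    (hp_int : ∫ x, p x ∂μ = 1)
    (L : Ω → ℝ) (LN : ℕ → Ω → ℝ)
    (hL_meas : Measurable L) (hLN_meas : ∀ N, Measurable (LN N))
    (A B : ℝ) (hA : 0 < A) (hAB : A ≤ B)
    (hL_bdd : ∀ x, A ≤ L x ∧ L x ≤ B)
    (hLN_bdd : ∀ N x, A ≤ LN N x ∧ LN N x ≤ B)
    (γ : ℝ) (hγ : γ = ∫ x, L x * p x ∂μ)
    (γN : ℕ → ℝ) (hγN : ∀ N, γN N = ∫ x, LN N x * p x ∂μ)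
    (f : Ω → ℝ) (hf : ∀ x, f x = L x * p x / γ)
    (fN : ℕ → Ω → ℝ) (hfN : ∀ N x, fN N x = LN N x * p x / γN N)
    (C : ℝ) (hC : 0 < C)
    (Q : ℕ → ℝ)
    (hbound : ∀ N, ∀ x, |LN N x - L x| ≤ C * Q N) :
    ∃ K > 0, ∀ N, ∫ x, fN N x * Real.log (fN N x / f x) ∂μ ≤ K * Q N ^ 2 := by
  have hB : 0 < B := hA.trans_le hAB
  refine ⟨4 * B * C ^ 2 / A ^ 3, by positivity, fun N => ?_⟩
  have hf_post : f = posterior μ p L := funext fun x => by rw [hf, hγ]; rfl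
  have hfN_post : fN N = posterior μ p (LN N) := funext fun x => by rw [hfN, hγN]; rfl
  calc ∫ x, fN N x * Real.log (fN N x / f x) ∂μ ≤ 4 * B * (C * Q N) ^ 2 / A ^ 3 := by
        rw [hf_post, hfN_post]
        exact integral_posterior_mul_log_div_le hA hp_nonneg hp_int hL_meas (hLN_meas N) hL_bdd
          (hLN_bdd N) (hbound N)
    _ = 4 * B * C ^ 2 / A ^ 3 * Q N ^ 2 := by ring

/-- Doubling of the convergence rate in the Kullback--Leibler divergence:
if the approximate likelihoods `L_N` converge to the true likelihood `L`
uniformly with rate `Q_N`, then the reversed Kullback--Leibler divergence `D_KL(f_N ‖ f)` between the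
approximate posterior `f_N = L_N·p/γ_N` and the true posterior `f = L·p/γ`
is bounded by `K · Q_N²`. -/
theorem KL_posterior_reversed_doubled_rate
    {Ω : Type*} [MeasurableSpace Ω] (μ : Measure Ω) [IsFiniteMeasure μ]
    (p : Ω → ℝ) (hp_meas : Measurable p) (hp_nonneg : ∀ x, 0 ≤ p x)
    (hp_int : ∫ x, p x ∂μ = 1)
    (L : Ω → ℝ) (LN : ℕ → Ω → ℝ)
    (hL_meas : Measurable L) (hLN_meas : ∀ N, Measurable (LN N))
    (A B : ℝ) (hA : 0 < A) (hAB : A ≤ B)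
    (hL_bdd : ∀ x, A ≤ L x ∧ L x ≤ B)
    (hLN_bdd : ∀ N x, A ≤ LN N x ∧ LN N x ≤ B)
    (γ : ℝ) (hγ : γ = ∫ x, L x * p x ∂μ)
    (γN : ℕ → ℝ) (hγN : ∀ N, γN N = ∫ x, LN N x * p x ∂μ)
    (f : Ω → ℝ) (hf : ∀ x, f x = L x * p x / γ)
    (fN : ℕ → Ω → ℝ) (hfN : ∀ N x, fN N x = LN N x * p x / γN N)
    (C : ℝ) (hC : 0 < C)
    (Q : ℕ → ℝ) (hQ : Tendsto Q atTop (nhds 0))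
    (hbound : ∀ N, ∀ x, |LN N x - L x| ≤ C * Q N) :
    ∃ K > 0, ∀ N, ∫ x, fN N x * Real.log (fN N x / f x) ∂μ ≤ K * Q N ^ 2 :=
  KL_posterior_reversed_doubled_rate_general μ p hp_nonneg hp_int L LN hL_meas hLN_meas A B hA hAB
    hL_bdd hLN_bdd γ hγ γN hγN f hf fN hfN C hC Q hbound
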